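/- arXiv:2204.09478 — 4 statements merged into one kernel-verified Lean document; each statement's English description precedes it below -/
import Mathlib

section
/- Let G be a nontrivial compact Hausdorff topological group (G ≠ {e}). Then the convolution semigroup P(G) of regular Borel probability measures on G is not algebraically (von Neumann) regular: there exists μ ∈ P(G) such that no ν ∈ P(G) satisfies μ ∗ ν ∗ μ = μ. -/
open MeasureTheory
open scoped MeasureTheory ENNReal

/-!
Fix `a ≠ 1` and let `μ = (2/3) δ₁ + (1/3) δₐ`. For any probability measure `ν`,
`(μ ∗ ν ∗ μ){1} = (4/9) (ν{1} + ν{a⁻¹}) + (1/9) ν{a⁻²} ≤ 5/9 < 2/3 = μ{1}`,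
since `{1}` and `{a⁻¹}` are disjoint. A measure supported on finitely many points of a `T₁`
space is regular, so `μ` is a regular probability measure without a generalized inverse.
-/

namespace MeasureTheory.Measure

theorem Regular.of_measure_compl_eq_zero {X : Type*} [TopologicalSpace X] [T1Space X]
    [MeasurableSpace X] {μ : Measure X} [IsFiniteMeasure μ] {s : Set X} (hs : s.Finite)
    (hμ : μ sᶜ = 0) : μ.Regular where
  outerRegular A _ r hr := ⟨(s \ A)ᶜ, fun x hx h => h.2 hx,
    (hs.sdiff (t := A)).isClosed.isOpen_compl, by
      rwa [← measure_inter_conull hμ, show (s \ A)ᶜ ∩ s = A ∩ s by ext; simp; tauto,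
        measure_inter_conull hμ]⟩
  innerRegular U _ r hr := ⟨U ∩ s, Set.inter_subset_left,
    (hs.inter_of_right U).isCompact, by rwa [measure_inter_conull hμ]⟩

section Monoid

variable {M : Type*} [Monoid M] [MeasurableSpace M] [MeasurableSingletonClass M]

/- `Measure.dirac_mconv` assumes `MeasurableMul₂`, which can fail without second countability;
against a Dirac factor, multiplication agrees a.e. with a (measurable) translation. -/
theorem mul_ae_eq_dirac_prod (x : M) (ν : Measure M) [SFinite ν] :
    (fun p : M × M ↦ p.1 * p.2) =ᵐ[(dirac x).prod ν] fun p ↦ x * p.2 := by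
  filter_upwards [quasiMeasurePreserving_fst.ae (ae_dirac_eq x ▸ Filter.eventually_pure.2 rfl :
    ∀ᵐ y ∂dirac x, y = x)] with p hp
  rw [hp]

theorem mul_ae_eq_prod_dirac (ρ : Measure M) (x : M) [SFinite ρ] :
    (fun p : M × M ↦ p.1 * p.2) =ᵐ[ρ.prod (dirac x)] fun p ↦ p.1 * x := by
  filter_upwards [quasiMeasurePreserving_snd.ae (ae_dirac_eq x ▸ Filter.eventually_pure.2 rfl :
    ∀ᵐ y ∂dirac x, y = x)] with p hp
  rw [hp]

variable [MeasurableMul M]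

theorem dirac_mconv' (x : M) (ν : Measure M) [SFinite ν] :
    dirac x ∗ₘ ν = ν.map (x * ·) := by
  rw [mconv, map_congr (mul_ae_eq_dirac_prod x ν), dirac_prod,
    map_map (by fun_prop) measurable_prodMk_left]
  rfl

theorem mconv_dirac' (ρ : Measure M) [SFinite ρ] (x : M) :
    ρ ∗ₘ dirac x = ρ.map (· * x) := by
  rw [mconv, map_congr (mul_ae_eq_prod_dirac ρ x), prod_dirac,
    map_map (by fun_prop) measurable_prodMk_right]
  rfl

theorem smul_dirac_add_smul_dirac_mconv (c d : ℝ≥0∞) (x y : M) (ν : Measure M) [SFinite ν] :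
    (c • dirac x + d • dirac y) ∗ₘ ν = c • ν.map (x * ·) + d • ν.map (y * ·) := by
  have h (z : M) : AEMeasurable (fun p : M × M ↦ p.1 * p.2) ((dirac z).prod ν) :=
    (measurable_snd.const_mul z).aemeasurable.congr (mul_ae_eq_dirac_prod z ν).symm
  rw [mconv, add_prod, prod_smul_left, prod_smul_left,
    AEMeasurable.map_add₀ ((h x).smul_measure c) ((h y).smul_measure d),
    Measure.map_smul, Measure.map_smul, ← mconv, ← mconv, dirac_mconv', dirac_mconv']

theorem mconv_smul_dirac_add_smul_dirac (c d : ℝ≥0∞) (x y : M) (ρ : Measure M) [SFinite ρ] :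
    ρ ∗ₘ (c • dirac x + d • dirac y) = c • ρ.map (· * x) + d • ρ.map (· * y) := by
  have h (z : M) : AEMeasurable (fun p : M × M ↦ p.1 * p.2) (ρ.prod (dirac z)) :=
    (measurable_fst.mul_const z).aemeasurable.congr (mul_ae_eq_prod_dirac ρ z).symm
  rw [mconv, prod_add, prod_smul_right, prod_smul_right,
    AEMeasurable.map_add₀ ((h x).smul_measure c) ((h y).smul_measure d),
    Measure.map_smul, Measure.map_smul, ← mconv, ← mconv, mconv_dirac', mconv_dirac']

end Monoid

section Group

variable {G : Type*} [Group G] [MeasurableSpace G] [MeasurableSingletonClass G] [MeasurableMul G]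

theorem map_mul_left_apply_singleton (ν : Measure G) (x y : G) :
    ν.map (x * ·) {y} = ν {x⁻¹ * y} := by
  rw [map_apply (measurable_const_mul x) (measurableSet_singleton y),
    Set.preimage_mul_left_singleton]

theorem map_mul_right_apply_singleton (ν : Measure G) (x y : G) :
    ν.map (· * x) {y} = ν {y * x⁻¹} := by
  rw [map_apply (measurable_mul_const x) (measurableSet_singleton y),
    Set.preimage_mul_right_singleton]

theorem smul_dirac_add_smul_dirac_mconv_mconv_apply_one (c d : ℝ≥0∞) (a : G) (ν : Measure G)
    [SFinite ν] :
    (((c • dirac 1 + d • dirac a) ∗ₘ ν) ∗ₘ (c • dirac 1 + d • dirac a)) {1} =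
      c * (c * ν {1} + d * ν {a⁻¹}) + d * (c * ν {a⁻¹} + d * ν {a⁻¹ * a⁻¹}) := by
  simp only [mconv_smul_dirac_add_smul_dirac, smul_dirac_add_smul_dirac_mconv, add_apply,
    smul_apply, smul_eq_mul, map_mul_left_apply_singleton, map_mul_right_apply_singleton,
    mul_one, one_mul, map_id']

theorem smul_dirac_add_smul_dirac_mconv_mconv_apply_one_le {a : G} (ha : a ≠ 1) (ν : Measure G)
    [IsProbabilityMeasure ν] {c d : ℝ≥0∞} (hdc : 2 * d ≤ c) :
    (((c • dirac 1 + d • dirac a) ∗ₘ ν) ∗ₘ (c • dirac 1 + d • dirac a)) {1} ≤ c * c + d * d := by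
  have hν : ν {1} + ν {a⁻¹} ≤ 1 := by
    rw [← measure_union (by simpa [eq_comm] using ha) (measurableSet_singleton _)]
    exact prob_le_one
  rw [smul_dirac_add_smul_dirac_mconv_mconv_apply_one]
  calc c * (c * ν {1} + d * ν {a⁻¹}) + d * (c * ν {a⁻¹} + d * ν {a⁻¹ * a⁻¹})
      = c * c * ν {1} + 2 * d * c * ν {a⁻¹} + d * d * ν {a⁻¹ * a⁻¹} := by ring
    _ ≤ c * c * ν {1} + c * c * ν {a⁻¹} + d * d * 1 := by gcongr; exact prob_le_one
    _ = c * c * (ν {1} + ν {a⁻¹}) + d * d := by ring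
    _ ≤ c * c * 1 + d * d := by gcongr
    _ = c * c + d * d := by rw [mul_one]

theorem smul_dirac_add_smul_dirac_mconv_mconv_ne_self {a : G} (ha : a ≠ 1) {c d : ℝ≥0∞}
    (hcd : c + d = 1) (hd : d ≠ 0) (hdc : 2 * d ≤ c) (ν : Measure G) [IsProbabilityMeasure ν] :
    ((c • dirac 1 + d • dirac a) ∗ₘ ν) ∗ₘ (c • dirac 1 + d • dirac a) ≠
      c • dirac 1 + d • dirac a := by
  intro heq
  have hd_top : d ≠ ∞ := ne_top_of_le_ne_top ENNReal.one_ne_top (hcd ▸ le_add_self)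
  have hc_top : c ≠ ∞ := ne_top_of_le_ne_top ENNReal.one_ne_top (hcd ▸ le_self_add)
  have hd_lt : d < c := by
    rw [two_mul] at hdc
    exact (ENNReal.lt_add_right hd_top hd).trans_le hdc
  have hlt : c * c + d * d < c :=
    calc c * c + d * d < c * c + c * d := by gcongr; exact ENNReal.mul_ne_top hc_top hc_top
      _ = c := by rw [← mul_add, hcd, mul_one]
  have hμ1 : (c • dirac 1 + d • dirac a : Measure G) {1} = c := by simp [ha]
  have hle := smul_dirac_add_smul_dirac_mconv_mconv_apply_one_le ha ν hdc
  rw [heq, hμ1] at hle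
  exact hle.not_gt hlt

end Group

end MeasureTheory.Measure

theorem pg_not_regular_general {G : Type*} [Group G] [TopologicalSpace G] [IsTopologicalGroup G]
    [T2Space G] [MeasurableSpace G] [BorelSpace G]
    [Nontrivial G] :
    ∃ μ : Measure G, IsProbabilityMeasure μ ∧ μ.Regular ∧
      ∀ ν : Measure G, IsProbabilityMeasure ν → ν.Regular → (μ ∗ₘ ν) ∗ₘ μ ≠ μ := by
  obtain ⟨a, ha⟩ := exists_ne (1 : G)
  have hcd : 2 * 3⁻¹ + 3⁻¹ = (1 : ℝ≥0∞) := by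
    rw [← add_one_mul, two_add_one_eq_three, ENNReal.mul_inv_cancel] <;> norm_num
  have hμ : IsProbabilityMeasure
      ((2 * 3⁻¹ : ℝ≥0∞) • Measure.dirac 1 + (3⁻¹ : ℝ≥0∞) • Measure.dirac a) :=
    ⟨by simpa using hcd⟩
  exact ⟨_, hμ, .of_measure_compl_eq_zero (s := {1, a}) (Set.toFinite _) (by simp),
    fun ν _ _ => Measure.smul_dirac_add_smul_dirac_mconv_mconv_ne_self ha hcd (by simp) le_rfl ν⟩

/-- For a nontrivial compact Hausdorff topological group `G`, the convolution semigroup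
of regular Borel probability measures on `G` is not algebraically (von Neumann) regular:
some regular probability measure `μ` admits no regular probability measure `ν` with
`μ ∗ ν ∗ μ = μ`. -/
theorem pg_not_regular {G : Type*} [Group G] [TopologicalSpace G] [IsTopologicalGroup G]
    [CompactSpace G] [T2Space G] [MeasurableSpace G] [BorelSpace G]
    [Nontrivial G] :
    ∃ μ : Measure G, IsProbabilityMeasure μ ∧ μ.Regular ∧
      ∀ ν : Measure G, IsProbabilityMeasure ν → ν.Regular → (μ ∗ₘ ν) ∗ₘ μ ≠ μ :=
  pg_not_regular_general
end

section
/- Let G = {e, a} be the two-element group (a² = e, a ≠ e). Then the elements of P(G) possessing a generalized inverse are exactly δ_e, δ_a, and (1/2)(δ_e + δ_a); that is, μ = α₀δ_e + α₁δ_a (with α₀, α₁ ≥ 0, α₀ + α₁ = 1) satisfies μ ∗ ν ∗ μ = μ for some ν ∈ P(G) if and only if α₀ ∈ {0, 1/2, 1}. -/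
/-!
Every `ν ∈ P(G)` is `β₀ δ_e + β₁ δ_a`, and convolution multiplies such combinations like the
group algebra of `ℤ/2`. Comparing the `δ_e`-coefficients of `μ ∗ ν ∗ μ` and `μ` gives
`(α₀ - α₁) · (α₀ β₁ + α₁ β₀) = 0`. Either `α₀ = α₁ = 1/2`, or both products vanish, which
forces `α₀ ∈ {0, 1}`. Conversely, for these three values `μ ∗ μ ∗ μ = μ`.
-/
open MeasureTheory
open scoped MeasureTheory ENNReal NNReal

lemma Real.eq_zero_or_eq_inv_two_or_eq_one_of_sandwich {p r q t : ℝ} (hp : 0 ≤ p) (hr : 0 ≤ r)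
    (hq : 0 ≤ q) (ht : 0 ≤ t) (hpr : p + r = 1) (hqt : q + t = 1)
    (h : (p * q + r * t) * p + (p * t + r * q) * r = p) :
    p = 0 ∨ p = 2⁻¹ ∨ p = 1 := by
  obtain rfl : r = 1 - p := by linarith
  obtain rfl : t = 1 - q := by linarith
  have key : (p - (1 - p)) * (p * (1 - q) + (1 - p) * q) = 0 := by linear_combination -h
  rcases mul_eq_zero.1 key with hhalf | hcross
  · exact Or.inr (Or.inl (by linarith))
  · have hpt : p * (1 - q) = 0 := by nlinarith [mul_nonneg hp ht, mul_nonneg hr hq]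
    have hrq : (1 - p) * q = 0 := by linarith
    rcases mul_eq_zero.1 hpt with hp0 | hq1
    · exact Or.inl hp0
    · right; right
      have : q = 1 := by linarith
      subst this
      linarith

lemma ENNReal.eq_zero_or_eq_inv_two_or_eq_one_of_sandwich {p r q t : ℝ≥0∞}
    (hpr : p + r = 1) (hqt : q + t = 1)
    (h : (p * q + r * t) * p + (p * t + r * q) * r = p) :
    p = 0 ∨ p = 2⁻¹ ∨ p = 1 := by
  lift p to ℝ≥0 using ne_top_of_le_ne_top one_ne_top (hpr ▸ le_self_add)
  lift r to ℝ≥0 using ne_top_of_le_ne_top one_ne_top (hpr ▸ le_add_self)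
  lift q to ℝ≥0 using ne_top_of_le_ne_top one_ne_top (hqt ▸ le_self_add)
  lift t to ℝ≥0 using ne_top_of_le_ne_top one_ne_top (hqt ▸ le_add_self)
  norm_cast at hpr hqt h
  have := Real.eq_zero_or_eq_inv_two_or_eq_one_of_sandwich p.coe_nonneg r.coe_nonneg
    q.coe_nonneg t.coe_nonneg (by exact_mod_cast hpr) (by exact_mod_cast hqt)
    (by exact_mod_cast h)
  rw [← NNReal.coe_two, ← NNReal.coe_inv] at this
  rw [← ENNReal.coe_two, ← ENNReal.coe_inv two_ne_zero]
  exact_mod_cast this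

namespace MeasureTheory.Measure

variable {M : Type*} [Monoid M] [MeasurableSpace M] {a : M}

noncomputable def twoPointMeasure (a : M) (p q : ℝ≥0∞) : Measure M := p • dirac 1 + q • dirac a

@[simp]
lemma twoPointMeasure_univ (p q : ℝ≥0∞) : twoPointMeasure a p q Set.univ = p + q := by
  simp [twoPointMeasure]

lemma isProbabilityMeasure_twoPointMeasure {p q : ℝ≥0∞} (h : p + q = 1) :
    IsProbabilityMeasure (twoPointMeasure a p q) :=
  ⟨by rw [twoPointMeasure_univ, h]⟩

lemma twoPointMeasure_mconv [MeasurableMul₂ M] (haa : a * a = 1) (p q r s : ℝ≥0∞) :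
    twoPointMeasure a p q ∗ₘ twoPointMeasure a r s =
      twoPointMeasure a (p * r + q * s) (p * s + q * r) := by
  simp only [twoPointMeasure, mconv_add, add_mconv, mconv_smul_left, mconv_smul_right,
    dirac_mconv_dirac, one_mul, mul_one, haa, smul_add, smul_smul, add_smul]
  module

lemma twoPointMeasure_mconv_mconv_self [MeasurableMul₂ M] (haa : a * a = 1) {p q : ℝ≥0∞}
    (hpq : p + q = 1) (hp : p = 0 ∨ p = 2⁻¹ ∨ p = 1) :
    (twoPointMeasure a p q ∗ₘ twoPointMeasure a p q) ∗ₘ twoPointMeasure a p q =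
      twoPointMeasure a p q := by
  rcases hp with rfl | rfl | rfl
  · obtain rfl : q = 1 := by simpa using hpq
    simp [twoPointMeasure_mconv haa]
  · obtain rfl : q = 2⁻¹ :=
      (ENNReal.add_right_inj (by simp)).1 (hpq.trans ENNReal.inv_two_add_inv_two.symm)
    have hhalf : (2⁻¹ : ℝ≥0∞) * 2⁻¹ + 2⁻¹ * 2⁻¹ = 2⁻¹ := by
      rw [← mul_add, ENNReal.inv_two_add_inv_two, mul_one]
    simp only [twoPointMeasure_mconv haa, hhalf]
  · obtain rfl : q = 0 := by simpa using hpq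
    simp [twoPointMeasure_mconv haa]

section

variable [MeasurableSingletonClass M]

lemma twoPointMeasure_apply_one (ha : a ≠ 1) (p q : ℝ≥0∞) : twoPointMeasure a p q {1} = p := by
  simp [twoPointMeasure, ha]

lemma twoPointMeasure_apply_self (ha : a ≠ 1) (p q : ℝ≥0∞) : twoPointMeasure a p q {a} = q := by
  simp [twoPointMeasure, ha.symm]

lemma twoPointMeasure_inj (ha : a ≠ 1) {p q r s : ℝ≥0∞} :
    twoPointMeasure a p q = twoPointMeasure a r s ↔ p = r ∧ q = s := by
  refine ⟨fun h ↦ ⟨?_, ?_⟩, fun ⟨hpr, hqs⟩ ↦ hpr ▸ hqs ▸ rfl⟩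
  · rw [← twoPointMeasure_apply_one ha p q, h, twoPointMeasure_apply_one ha]
  · rw [← twoPointMeasure_apply_self ha p q, h, twoPointMeasure_apply_self ha]

lemma eq_twoPointMeasure (ha : a ≠ 1) (hM : ∀ g : M, g = 1 ∨ g = a) (ν : Measure M) :
    ν = twoPointMeasure a (ν {1}) (ν {a}) := by
  have huniv : Set.univ = ({1} ∪ {a} : Set M) := Set.eq_univ_of_forall hM |>.symm
  rw [twoPointMeasure, ← restrict_singleton, ← restrict_singleton, ← restrict_union
    (Set.disjoint_singleton.2 ha.symm) (measurableSet_singleton a), ← huniv, restrict_univ]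

end

end MeasureTheory.Measure

open Measure

theorem two_element_group_regular_elements_general {G : Type*} [Group G] [TopologicalSpace G]
    [T2Space G] [MeasurableSpace G] [BorelSpace G]
    (a : G) (ha : a ≠ 1) (ha2 : a ^ 2 = 1) (hG : ∀ g : G, g = 1 ∨ g = a)
    (α₀ α₁ : ℝ≥0∞) (hsum : α₀ + α₁ = 1)
    (μ : Measure G)
    (hμ : μ = α₀ • Measure.dirac (1 : G) + α₁ • Measure.dirac a) :
    (∃ ν : Measure G, IsProbabilityMeasure ν ∧ ν.Regular ∧ (μ ∗ₘ ν) ∗ₘ μ = μ) ↔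
      (α₀ = 0 ∨ α₀ = 2⁻¹ ∨ α₀ = 1) := by
  have : Finite G := Set.finite_univ_iff.1 <| (Set.toFinite {1, a}).subset fun g _ ↦ hG g
  have haa : a * a = 1 := by rw [← sq, ha2]
  change μ = twoPointMeasure a α₀ α₁ at hμ
  subst hμ
  constructor
  · rintro ⟨ν, hν, -, hsandwich⟩
    have hν1 : ν {1} + ν {a} = 1 := by
      rw [← twoPointMeasure_univ (a := a), ← eq_twoPointMeasure ha hG, measure_univ]
    rw [eq_twoPointMeasure ha hG ν, twoPointMeasure_mconv haa, twoPointMeasure_mconv haa,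
      twoPointMeasure_inj ha] at hsandwich
    exact ENNReal.eq_zero_or_eq_inv_two_or_eq_one_of_sandwich hsum hν1 hsandwich.1
  · intro hα₀
    have := isProbabilityMeasure_twoPointMeasure (a := a) hsum
    exact ⟨_, this, inferInstance, twoPointMeasure_mconv_mconv_self haa hsum hα₀⟩

/-- In the two-element group `G = {e, a}` (`a ≠ e`, `a² = e`) the elements of `P(G)`
possessing a generalized inverse are exactly `δ_e`, `δ_a` and `(1/2)(δ_e + δ_a)`:
`μ = α₀ δ_e + α₁ δ_a` with `α₀ + α₁ = 1` has a generalized inverse iff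
`α₀ ∈ {0, 1/2, 1}`. -/
theorem two_element_group_regular_elements {G : Type*} [Group G] [TopologicalSpace G]
    [IsTopologicalGroup G] [CompactSpace G] [T2Space G] [MeasurableSpace G] [BorelSpace G]
    (a : G) (ha : a ≠ 1) (ha2 : a ^ 2 = 1) (hG : ∀ g : G, g = 1 ∨ g = a)
    (α₀ α₁ : ℝ≥0∞) (hsum : α₀ + α₁ = 1)
    (μ : Measure G)
    (hμ : μ = α₀ • Measure.dirac (1 : G) + α₁ • Measure.dirac a) :
    (∃ ν : Measure G, IsProbabilityMeasure ν ∧ ν.Regular ∧ (μ ∗ₘ ν) ∗ₘ μ = μ) ↔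
      (α₀ = 0 ∨ α₀ = 2⁻¹ ∨ α₀ = 1) :=
  two_element_group_regular_elements_general a ha ha2 hG α₀ α₁ hsum μ hμ
end

section
/- Let G be a compact Hausdorff topological group and let μ be a regular Borel probability measure on G that is idempotent under convolution, μ ∗ μ = μ. Then the topological support supp(μ) is a closed subgroup of G. -/
/-!
Convolution multiplies supports: if `U` is an open neighbourhood of `x * y`, continuity of
multiplication gives open `V ∋ x`, `W ∋ y` with `V * W ⊆ U`, so `(μ ∗ μ)(U) ≥ μ(V) μ(W) > 0`.
Hence `μ ∗ μ = μ` makes `supp μ` a closed subsemigroup of `G`, nonempty because `G` is compact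
and `μ ≠ 0`. In a compact group `x⁻¹` is a cluster point of the powers `xⁿ`, `n ≥ 1`, so a closed
subsemigroup is closed under inverses.
-/

open MeasureTheory
open scoped MeasureTheory ENNReal

/-- The topological support of a measure: the set of points all of whose open
neighbourhoods have positive measure. -/
def measSupport {G : Type*} [TopologicalSpace G] [MeasurableSpace G]
    (μ : Measure G) : Set G :=
  {x | ∀ U : Set G, IsOpen U → x ∈ U → 0 < μ U}

open Filter

namespace MeasureTheory.Measure

variable {X : Type*} [TopologicalSpace X] [MeasurableSpace X]

theorem measSupport_eq_support (μ : Measure X) : measSupport μ = μ.support := by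
  ext x
  simp only [measSupport, support_eq_forall_isOpen, Set.mem_ofPred_eq]
  exact forall_congr' fun U ↦ forall_comm

theorem nonempty_support_of_compactSpace [CompactSpace X] {μ : Measure X} (hμ : μ ≠ 0) :
    μ.support.Nonempty := by
  by_contra hempty
  rw [Set.not_nonempty_iff_eq_empty] at hempty
  have hnull : μ Set.univ = 0 :=
    measure_eq_zero_of_isCompact_subset_compl_support isCompact_univ (by simp [hempty])
  exact hμ (measure_univ_eq_zero.mp hnull)

theorem mul_mem_support_mconv {M : Type*} [Monoid M] [TopologicalSpace M] [ContinuousMul M]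
    [MeasurableSpace M] [OpensMeasurableSpace M] {μ ν : Measure M} [SFinite ν]
    (hμν : μ ∗ₘ ν ≠ 0) {x y : M} (hx : x ∈ μ.support) (hy : y ∈ ν.support) :
    x * y ∈ (μ ∗ₘ ν).support := by
  have hmul : AEMeasurable (fun p : M × M ↦ p.1 * p.2) (μ.prod ν) := by
    by_contra h
    exact hμν (map_of_not_aemeasurable h)
  rw [support_eq_forall_isOpen] at hx hy ⊢
  intro U hxyU hU
  obtain ⟨V, W, hV, hxV, hW, hyW, hVW⟩ := mem_nhds_prod_iff'.mp
    (continuous_mul.continuousAt.preimage_mem_nhds (hU.mem_nhds hxyU))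
  calc 0 < μ V * ν W := ENNReal.mul_pos (hx V hxV hV).ne' (hy W hyW hW).ne'
    _ = μ.prod ν (V ×ˢ W) := (prod_prod V W).symm
    _ ≤ μ.prod ν ((fun p : M × M ↦ p.1 * p.2) ⁻¹' U) := measure_mono hVW
    _ = (μ ∗ₘ ν) U := (map_apply_of_aemeasurable hmul hU.measurableSet).symm

end MeasureTheory.Measure

section CompactGroup

variable {G : Type*} [Group G] [TopologicalSpace G] [CompactSpace G] [IsTopologicalGroup G]

theorem Subsemigroup.inv_mem_of_isClosed (S : Subsemigroup G) (hS : IsClosed (S : Set G))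
    {x : G} (hx : x ∈ S) : x⁻¹ ∈ S := by
  have hpow : ∀ n : ℕ, x ^ (n + 1) ∈ S := by
    intro n
    induction n with
    | zero => simpa using hx
    | succ n ih => simpa only [pow_succ] using S.mul_mem ih hx
  have hcluster : MapClusterPt x⁻¹ atTop (x ^ · : ℕ → G) := by
    simpa using mapClusterPt_self_zpow_atTop_pow x (-1)
  refine hS.mem_of_mapClusterPt hcluster ((eventually_ge_atTop 1).mono fun n hn ↦ ?_)
  obtain ⟨k, rfl⟩ := Nat.exists_eq_add_of_le' hn
  exact hpow k

def Subsemigroup.toSubgroupOfIsClosed (S : Subsemigroup G) (hS : IsClosed (S : Set G))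
    (hne : (S : Set G).Nonempty) : Subgroup G where
  carrier := S
  mul_mem' := S.mul_mem
  one_mem' := by
    obtain ⟨x, hx⟩ := hne
    simpa using S.mul_mem hx (S.inv_mem_of_isClosed hS hx)
  inv_mem' := S.inv_mem_of_isClosed hS

end CompactGroup

theorem support_of_idempotent_is_closed_subgroup_general {G : Type*} [Group G] [TopologicalSpace G]
    [IsTopologicalGroup G] [CompactSpace G] [MeasurableSpace G] [BorelSpace G]
    (μ : Measure G) (hμ : IsProbabilityMeasure μ)
    (hidem : μ ∗ₘ μ = μ) :
    ∃ H : Subgroup G, IsClosed (H : Set G) ∧ measSupport μ = (H : Set G) := by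
  have hμ0 : μ ∗ₘ μ ≠ 0 := by rw [hidem]; exact hμ.ne_zero
  let S : Subsemigroup G :=
    { carrier := μ.support
      mul_mem' := fun hx hy ↦ hidem ▸ Measure.mul_mem_support_mconv hμ0 hx hy }
  have hS : IsClosed (S : Set G) := Measure.isClosed_support
  have hne : (S : Set G).Nonempty := Measure.nonempty_support_of_compactSpace hμ.ne_zero
  exact ⟨S.toSubgroupOfIsClosed hS hne, hS, Measure.measSupport_eq_support μ⟩

/-- The support of a convolution-idempotent regular Borel probability measure on a compact
Hausdorff topological group is a closed subgroup. -/
theorem support_of_idempotent_is_closed_subgroup {G : Type*} [Group G] [TopologicalSpace G]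
    [IsTopologicalGroup G] [CompactSpace G] [T2Space G] [MeasurableSpace G] [BorelSpace G]
    (μ : Measure G) (hμ : IsProbabilityMeasure μ) (hμr : μ.Regular)
    (hidem : μ ∗ₘ μ = μ) :
    ∃ H : Subgroup G, IsClosed (H : Set G) ∧ measSupport μ = (H : Set G) :=
  support_of_idempotent_is_closed_subgroup_general μ hμ hidem
end

section
/- Let G = {g₀ = e, g₁, …, gₙ} be a finite abelian group with n ≥ 1 in which every element satisfies g² = e, and let μ = Σ_{k=0}^{n} α_k δ_{g_k} with all α_k > 0 and Σ_k α_k = 1. Let A be the (n+1) × (n+1) real matrix with entries A_{jk} = α_{S_j(k)}, where S_j is the permutation of {0,1,…,n} determined by g_j g_k = g_{S_j(k)}. If A is invertible, then μ has no generalized inverse in P(G): there is no probability measure ν on G with μ ∗ ν ∗ μ = μ. -/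
/-!
Because every element of `G` is its own inverse, `A` is the matrix of right convolution by `μ`
acting on the vector of point masses, so invertibility of `A` makes `ρ ↦ ρ ∗ μ` injective.
Then `(μ ∗ ν) ∗ μ = μ = δ₁ ∗ μ` forces `μ ∗ ν = δ₁`. But `μ` charges every point, hence so
does `μ ∗ ν`, whereas `δ₁` does not charge the elements `g ≠ 1`, which exist since `n ≥ 1`.
-/

open MeasureTheory
open scoped MeasureTheory ENNReal Matrix

namespace MeasureTheory.Measure

section Group

variable {G : Type*} [Group G] [Fintype G] [MeasurableSpace G] [MeasurableSingletonClass G]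

theorem mconv_apply_singleton (μ ν : Measure G) [SFinite ν] (g : G) :
    (μ ∗ₘ ν) {g} = ∑ x, μ {x} * ν {x⁻¹ * g} := by
  have hmul : Measurable (fun p : G × G => p.1 * p.2) := measurable_of_countable _
  rw [mconv, map_apply hmul (measurableSet_singleton g),
    prod_apply (hmul (measurableSet_singleton g)), lintegral_fintype]
  refine Finset.sum_congr rfl fun x _ => ?_
  rw [mul_comm]
  congr 2
  ext y
  simp [eq_inv_mul_iff_mul_eq]

theorem mconv_apply_singleton_pos {μ ν : Measure G} [SFinite ν] (hμ : ∀ x, 0 < μ {x})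
    (hν : ν ≠ 0) (g : G) : 0 < (μ ∗ₘ ν) {g} := by
  obtain ⟨y, hy⟩ : ∃ y, ν {y} ≠ 0 := by
    by_contra! h
    exact hν (ext_of_singleton fun y => by simp [h y])
  rw [mconv_apply_singleton]
  calc 0 < μ {g * y⁻¹} * ν {(g * y⁻¹)⁻¹ * g} := by
        simpa [ENNReal.mul_pos_iff, pos_iff_ne_zero] using ⟨(hμ _).ne', hy⟩
    _ ≤ ∑ x, μ {x} * ν {x⁻¹ * g} :=
        Finset.single_le_sum (f := fun x => μ {x} * ν {x⁻¹ * g}) (fun _ _ => zero_le)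
          (Finset.mem_univ _)

end Group

section Fintype

variable {α ι : Type*} [MeasurableSpace α] [MeasurableSingletonClass α] [Fintype ι]

theorem sum_smul_dirac_apply_singleton (e : ι ≃ α) (c : ι → ℝ≥0∞) (a : α) :
    (∑ k, c k • dirac (e k)) {a} = c (e.symm a) := by
  rw [finsetSum_apply, Finset.sum_eq_single (e.symm a)]
  · simp
  · intro k _ hk
    have hka : e k ≠ a := fun h => hk (by simp [← h])
    simp [hka]
  · simp

theorem isFiniteMeasure_of_measure_singleton_ne_top [Fintype α] {μ : Measure α}
    (hμ : ∀ a, μ {a} ≠ ∞) : IsFiniteMeasure μ := by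
  refine ⟨?_⟩
  rw [← Finset.coe_univ, ← sum_measure_singleton]
  exact ENNReal.sum_lt_top.2 fun a _ => (hμ a).lt_top

end Fintype

section ExponentTwo

variable {G ι : Type*} [CommGroup G] [Fintype G] [MeasurableSpace G] [MeasurableSingletonClass G]
  [Fintype ι]

def massVec (e : ι ≃ G) (ρ : Measure G) : ι → ℝ := fun k => (ρ {e k}).toReal

def convMatrix (e : ι ≃ G) (μ : Measure G) : Matrix ι ι ℝ :=
  Matrix.of fun j k => (μ {e j * e k}).toReal

theorem massVec_mconv (hG : ∀ x : G, x⁻¹ = x) (e : ι ≃ G) (ρ μ : Measure G) [IsFiniteMeasure ρ]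
    [IsFiniteMeasure μ] : massVec e (ρ ∗ₘ μ) = convMatrix e μ *ᵥ massVec e ρ := by
  funext j
  rw [massVec, mconv_apply_singleton, ← e.sum_comp,
    ENNReal.toReal_sum fun _ _ => ENNReal.mul_ne_top (measure_ne_top _ _) (measure_ne_top _ _)]
  simp [Matrix.mulVec, dotProduct, convMatrix, massVec, hG, mul_comm]

theorem mconv_left_injective_of_isUnit_det [DecidableEq ι] (hG : ∀ x : G, x⁻¹ = x) (e : ι ≃ G)
    {μ : Measure G} [IsFiniteMeasure μ] (hA : IsUnit (convMatrix e μ).det) {ρ ρ' : Measure G}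
    [IsFiniteMeasure ρ] [IsFiniteMeasure ρ'] (h : ρ ∗ₘ μ = ρ' ∗ₘ μ) : ρ = ρ' := by
  have hmass : massVec e ρ = massVec e ρ' := by
    apply Matrix.mulVec_injective_iff_isUnit.2 ((Matrix.isUnit_iff_isUnit_det _).2 hA)
    rw [← massVec_mconv hG, ← massVec_mconv hG, h]
  refine ext_of_singleton fun a => ?_
  rw [← e.apply_symm_apply a, ← ENNReal.toReal_eq_toReal_iff' (measure_ne_top _ _)
    (measure_ne_top _ _)]
  exact congrFun hmass (e.symm a)

end ExponentTwo

end MeasureTheory.Measure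

theorem invertible_matrix_obstruction_general {G : Type*} [CommGroup G] [Fintype G]
    [MeasurableSpace G] [MeasurableSingletonClass G]
    (hsq : ∀ x : G, x ^ 2 = 1) (n : ℕ) (hn : 1 ≤ n)
    (e : Fin (n + 1) ≃ G)
    (α : Fin (n + 1) → ℝ) (hα : ∀ k, 0 < α k)
    (μ : Measure G)
    (hμ : μ = ∑ k, ENNReal.ofReal (α k) • Measure.dirac (e k))
    (A : Matrix (Fin (n + 1)) (Fin (n + 1)) ℝ)
    (hA : ∀ j k, A j k = α (e.symm (e j * e k)))
    (hinv : IsUnit A.det) :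
    ¬ ∃ ν : Measure G, IsProbabilityMeasure ν ∧ (μ ∗ₘ ν) ∗ₘ μ = μ := by
  rintro ⟨ν, hν, hconv⟩
  have hG : ∀ x : G, x⁻¹ = x := fun x => inv_eq_of_mul_eq_one_right (by rw [← sq, hsq])
  have hμ_singleton (g : G) : μ {g} = ENNReal.ofReal (α (e.symm g)) := by
    rw [hμ, Measure.sum_smul_dirac_apply_singleton]
  have : IsFiniteMeasure μ :=
    Measure.isFiniteMeasure_of_measure_singleton_ne_top fun g => by simp [hμ_singleton]
  have hA_eq : Measure.convMatrix e μ = A := by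
    ext j k
    simp [Measure.convMatrix, hμ_singleton, hA, (hα _).le]
  have hδ : μ ∗ₘ ν = Measure.dirac 1 :=
    Measure.mconv_left_injective_of_isUnit_det hG e (hA_eq ▸ hinv)
      (by rw [hconv, Measure.dirac_one_mconv])
  have : Nontrivial (Fin (n + 1)) := Fin.nontrivial_iff_two_le.2 (by omega)
  have : Nontrivial G := e.symm.nontrivial
  obtain ⟨g, hg⟩ := exists_ne (1 : G)
  have hpos : 0 < (μ ∗ₘ ν) {g} :=
    Measure.mconv_apply_singleton_pos (fun x => by simp [hμ_singleton, hα])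
      (IsProbabilityMeasure.ne_zero ν) g
  simp [hδ, hg.symm] at hpos

/-- Let `G = {g₀ = e, g₁, …, gₙ}` (`n ≥ 1`) be a finite abelian group in which every
element satisfies `g² = e`, and let `μ = ∑ α_k δ_{g_k}` with all `α_k > 0` summing to `1`.
Let `A` be the matrix with entries `A j k = α_{S_j(k)}` where `g_j g_k = g_{S_j(k)}`.
If `A` is invertible, then `μ` has no generalized inverse in `P(G)`. -/
theorem invertible_matrix_obstruction {G : Type*} [CommGroup G] [Fintype G]
    [MeasurableSpace G] [MeasurableSingletonClass G]
    (hsq : ∀ x : G, x ^ 2 = 1) (n : ℕ) (hn : 1 ≤ n)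
    (e : Fin (n + 1) ≃ G) (he : e 0 = 1)
    (α : Fin (n + 1) → ℝ) (hα : ∀ k, 0 < α k) (hsum : ∑ k, α k = 1)
    (μ : Measure G)
    (hμ : μ = ∑ k, ENNReal.ofReal (α k) • Measure.dirac (e k))
    (A : Matrix (Fin (n + 1)) (Fin (n + 1)) ℝ)
    (hA : ∀ j k, A j k = α (e.symm (e j * e k)))
    (hinv : IsUnit A.det) :
    ¬ ∃ ν : Measure G, IsProbabilityMeasure ν ∧ (μ ∗ₘ ν) ∗ₘ μ = μ :=
  invertible_matrix_obstruction_general hsq n hn e α hα μ hμ A hA hinv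
end
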